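/- arXiv:1207.5548 — 2 statements merged into one kernel-verified Lean document; each statement's English description precedes it below -/
import Mathlib

section
/- Fix integers n, j, m ≥ 1 with j ≤ n, a composition (n_1,…,n_j) of n into j positive parts, a real α < 1, and real weights V(n,k) with V(n,j) ≠ 0. Let 1 ≤ r ≤ j and let m_1,…,m_r be nonnegative integers with M = ∑_{i=1}^{r} m_i ≤ m. Then the r-dimensional marginal of the joint conditional distribution of old-block allocations satisfies: ∑ J(m_1,…,m_j; s) = [m!·∏_{i=1}^{r} (n_i−α)_{m_i}/(m_1!⋯m_r!·(m−M)!)]·∑_{k=0}^{m−M} (V(n+m,j+k)/V(n,j))·S(m−M, k; α, −(n−(j−r)α−∑_{i=1}^{r} n_i)), where the sum ranges over all tuples (m_{r+1},…,m_j) of nonnegative integers and s ≥ 0 with ∑_{i=r+1}^{j} m_i + s = m − M. -/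
/-- Rising factorial `(x)_n = x(x+1)⋯(x+n−1)`. -/
noncomputable def risingFac (x : ℝ) (n : ℕ) : ℝ := ∏ i ∈ Finset.range n, (x + i)

/-- Rising factorial with increment `α`: `(x)_{n↑α} = ∏_{i<n} (x + iα)`. -/
noncomputable def risingFacInc (x α : ℝ) (n : ℕ) : ℝ := ∏ i ∈ Finset.range n, (x + i * α)

/-- Falling factorial `(x)_{[n]} = x(x−1)⋯(x−n+1)`. -/
noncomputable def fallingFac (x : ℝ) (n : ℕ) : ℝ := ∏ i ∈ Finset.range n, (x - i)

/-- Compositions of `n` into `k` positive parts, as functions `Fin k → ℕ`. -/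
def compositions (n k : ℕ) : Finset (Fin k → ℕ) :=
  (Fintype.piFinset fun _ => Finset.range (n + 1)).filter
    (fun f => (∀ i, 0 < f i) ∧ ∑ i, f i = n)

/-- Tuples of `k` nonnegative integers summing to `n`. -/
def weakCompositions (n k : ℕ) : Finset (Fin k → ℕ) :=
  (Fintype.piFinset fun _ => Finset.range (n + 1)).filter (fun f => ∑ i, f i = n)

/-- Generalized (central) Stirling number
`S(n,k;α) = (n!/k!) ∑_{(n_1,…,n_k)} ∏_j (1−α)_{n_j−1}/n_j!`,
the sum over compositions of `n` into `k` positive parts. -/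
noncomputable def genStirling (α : ℝ) (n k : ℕ) : ℝ :=
  (Nat.factorial n : ℝ) / (Nat.factorial k : ℝ) *
    ∑ f ∈ compositions n k, ∏ j, risingFac (1 - α) (f j - 1) / (Nat.factorial (f j) : ℝ)

/-- Non-central generalized Stirling number
`S(n,k;α,γ) = ∑_{s=k}^n C(n,s) S(s,k;α) (−γ)_{n−s}`. -/
noncomputable def genStirlingNC (α γ : ℝ) (n k : ℕ) : ℝ :=
  ∑ s ∈ Finset.Icc k n, (n.choose s : ℝ) * genStirling α s k * risingFac (-γ) (n - s)

/-- The joint conditional distribution of old-block allocations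
`J(m_1,…,m_j;s) = m!/(m_1!⋯m_j!·s!)·∏_i (n_i−α)_{m_i}·
∑_{k=0}^{s} (V(n+m,j+k)/V(n,j))·S(s,k;α)`. -/
noncomputable def oldJoint (α : ℝ) (V : ℕ → ℕ → ℝ) (n j m : ℕ) (nv : Fin j → ℕ)
    (mv : Fin j → ℕ) (s : ℕ) : ℝ :=
  (Nat.factorial m : ℝ) /
      ((∏ i, (Nat.factorial (mv i) : ℝ)) * (Nat.factorial s : ℝ)) *
    (∏ i, risingFac ((nv i : ℝ) - α) (mv i)) *
    ∑ k ∈ Finset.range (s + 1), (V (n + m) (j + k) / V n j) * genStirling α s k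


/-!
Write `t = m - ∑ mᵢ` and `x_i = n_i - α` for the unobserved blocks `i > r`. Once `s` is
fixed, the unobserved allocations range over the tuples `w` with `∑ w = t - s`, and the
multinomial Chu–Vandermonde identity `∑_{∑ w = N} ∏ (x_i)_{w_i} / w_i! = (∑ x_i)_N / N!`
collapses their sum to a single rising factorial in `y = ∑ x_i`, where by `∑ n_i = n`
`y = n - (j - r) α - ∑_{i ≤ r} n_i`.
What is left is the binomial convolution `∑_s C(t, s) (y)_{t-s} S(s, k; α)`, which is by
definition the non-central Stirling number `S(t, k; α, -y)`.
-/

open Finset Nat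

lemma risingFac_zero (x : ℝ) : risingFac x 0 = 1 := prod_range_zero _

lemma risingFac_succ (x : ℝ) (n : ℕ) : risingFac x (n + 1) = risingFac x n * (x + n) :=
  prod_range_succ _ _

lemma risingFac_zero_left {n : ℕ} (hn : n ≠ 0) : risingFac 0 n = 0 :=
  prod_eq_zero (mem_range.mpr (Nat.pos_of_ne_zero hn)) (by simp)

theorem risingFac_add (x y : ℝ) (N : ℕ) :
    risingFac (x + y) N =
      ∑ p ∈ antidiagonal N, (N.choose p.1 : ℝ) * (risingFac x p.1 * risingFac y p.2) := by
  induction N with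
  | zero => simp [risingFac_zero]
  | succ N ih =>
    rw [risingFac_succ, ih, sum_mul,
      sum_antidiagonal_choose_succ_mul (fun a b => risingFac x a * risingFac y b) N,
      ← sum_add_distrib]
    refine sum_congr rfl fun p hp => ?_
    have hp : p.1 + p.2 = N := mem_antidiagonal.mp hp
    rw [risingFac_succ, risingFac_succ, Nat.choose_symm_of_eq_add hp.symm, ← hp]
    push_cast
    ring

theorem risingFac_add_div_factorial (x y : ℝ) (N : ℕ) :
    risingFac (x + y) N / N ! =
      ∑ p ∈ antidiagonal N, risingFac x p.1 / p.1 ! * (risingFac y p.2 / p.2 !) := by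
  rw [risingFac_add, sum_div]
  refine sum_congr rfl fun p hp => ?_
  obtain rfl := mem_antidiagonal.mp hp
  rw [Nat.cast_add_choose]
  field_simp

lemma sum_antidiagonalTuple_succ {M : Type*} [AddCommMonoid M] (q N : ℕ)
    (F : (Fin (q + 1) → ℕ) → M) :
    ∑ w ∈ Nat.antidiagonalTuple (q + 1) N, F w =
      ∑ p ∈ antidiagonal N, ∑ w ∈ Nat.antidiagonalTuple q p.2, F (Fin.cons p.1 w) := by
  rw [sum_sigma']
  refine sum_bij' (fun w _ => ⟨(w 0, ∑ i : Fin q, w i.succ), Fin.tail w⟩)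
    (fun x _ => Fin.cons x.1.1 x.2) ?_ ?_ (fun w _ => Fin.cons_self_tail w) ?_
    (fun w _ => by rw [Fin.cons_self_tail])
  · intro w hw
    rw [Nat.mem_antidiagonalTuple, Fin.sum_univ_succ] at hw
    simp only [mem_sigma, HasAntidiagonal.mem_antidiagonal, Nat.mem_antidiagonalTuple]
    exact ⟨hw, rfl⟩
  · rintro ⟨⟨a, b⟩, w⟩ hw
    simp only [mem_sigma, HasAntidiagonal.mem_antidiagonal, Nat.mem_antidiagonalTuple] at hw ⊢
    rw [Fin.sum_univ_succ]
    simpa [hw.2] using hw.1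
  · rintro ⟨⟨a, b⟩, w⟩ hw
    simp only [mem_sigma, HasAntidiagonal.mem_antidiagonal, Nat.mem_antidiagonalTuple] at hw
    simp [hw.2]

theorem sum_prod_risingFac_div_factorial {q : ℕ} (x : Fin q → ℝ) (N : ℕ) :
    ∑ w ∈ Nat.antidiagonalTuple q N, ∏ i, risingFac (x i) (w i) / (w i)! =
      risingFac (∑ i, x i) N / N ! := by
  induction q generalizing N with
  | zero => cases N <;> simp [risingFac_zero, risingFac_zero_left]
  | succ q ih =>
    rw [sum_antidiagonalTuple_succ, Fin.sum_univ_succ, risingFac_add_div_factorial]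
    refine sum_congr rfl fun p _ => ?_
    rw [← ih, mul_sum]
    simp [Fin.prod_univ_succ, mul_div_mul_comm]

lemma compositions_eq_empty {n k : ℕ} (h : n < k) : compositions n k = ∅ := by
  refine filter_eq_empty_iff.mpr fun f _ ⟨hpos, hsum⟩ => h.not_ge ?_
  calc k = ∑ _i : Fin k, 1 := by simp
    _ ≤ ∑ i, f i := sum_le_sum fun i _ => hpos i
    _ = n := hsum

lemma genStirling_eq_zero_of_lt (α : ℝ) {n k : ℕ} (h : n < k) : genStirling α n k = 0 := by
  simp [genStirling, compositions_eq_empty h]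

lemma genStirlingNC_eq_sum_range (α γ : ℝ) (t k : ℕ) :
    genStirlingNC α γ t k =
      ∑ s ∈ range (t + 1),
        (t.choose s : ℝ) * genStirling α s k * risingFac (-γ) (t - s) := by
  refine sum_subset (fun s hs => ?_) fun s _ hs => ?_
  · simp only [mem_Icc, mem_range] at hs ⊢; omega
  · rw [genStirling_eq_zero_of_lt α (by simp_all), mul_zero, zero_mul]

lemma sum_range_mul_genStirling_of_le (α : ℝ) (c : ℕ → ℝ) {s t : ℕ} (h : s ≤ t) :
    ∑ k ∈ range (s + 1), c k * genStirling α s k =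
      ∑ k ∈ range (t + 1), c k * genStirling α s k := by
  refine sum_subset (range_subset_range.mpr (by omega)) fun k _ hk => ?_
  rw [genStirling_eq_zero_of_lt α (by simpa using hk), mul_zero]

theorem sum_choose_mul_risingFac_mul_sum_genStirling (α y : ℝ) (c : ℕ → ℝ) (t : ℕ) :
    ∑ s ∈ range (t + 1), (t.choose s : ℝ) * risingFac y (t - s) *
        ∑ k ∈ range (s + 1), c k * genStirling α s k =
      ∑ k ∈ range (t + 1), c k * genStirlingNC α (-y) t k := by
  rw [sum_congr rfl fun s hs => by
    rw [sum_range_mul_genStirling_of_le α c (Nat.lt_succ_iff.mp (mem_range.mp hs))]]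
  simp_rw [genStirlingNC_eq_sum_range, neg_neg, mul_sum]
  rw [sum_comm]
  refine sum_congr rfl fun k _ => sum_congr rfl fun s _ => by ring

lemma sum_filter_piFinset_product_eq_sum_antidiagonalTuple {M : Type*} [AddCommMonoid M]
    (q m t : ℕ) (ht : t ≤ m) (F : (Fin q → ℕ) × ℕ → M) :
    ∑ p ∈ ((Fintype.piFinset fun _ : Fin q => range (m + 1)) ×ˢ range (m + 1)).filter
        (fun p => ∑ i, p.1 i + p.2 = t), F p =
      ∑ s ∈ range (t + 1), ∑ w ∈ Nat.antidiagonalTuple q (t - s), F (w, s) := by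
  rw [sum_sigma']
  refine sum_bij' (fun p _ => ⟨p.2, p.1⟩) (fun x _ => (x.2, x.1)) ?_ ?_
    (fun _ _ => rfl) (fun _ _ => rfl) (fun _ _ => rfl)
  · intro p hp
    simp only [mem_filter, mem_product, Fintype.mem_piFinset, mem_range] at hp
    simp only [mem_sigma, mem_range, Nat.mem_antidiagonalTuple]
    omega
  · rintro ⟨s, w⟩ hw
    simp only [mem_sigma, mem_range, Nat.mem_antidiagonalTuple] at hw
    have hle : ∀ i, w i ≤ t - s := fun i =>
      hw.2 ▸ single_le_sum (fun _ _ => Nat.zero_le _) (mem_univ i)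
    simp only [mem_filter, mem_product, Fintype.mem_piFinset, mem_range]
    exact ⟨⟨fun i => by have := hle i; omega, by omega⟩, by omega⟩

@[to_additive]
lemma prod_univ_eq_prod_castAdd_mul_prod_natAdd {M : Type*} [CommMonoid M] {j r q : ℕ}
    (h : j = r + q) (f : Fin j → M) :
    ∏ i, f i = (∏ i : Fin r, f (Fin.cast h.symm (Fin.castAdd q i))) *
      ∏ i : Fin q, f (Fin.cast h.symm (Fin.natAdd r i)) := by
  subst h
  exact Fin.prod_univ_add f

lemma oldJoint_append (α : ℝ) (V : ℕ → ℕ → ℝ) (n m : ℕ) {j r q : ℕ} (h : j = r + q)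
    (nv : Fin j → ℕ) (mv : Fin r → ℕ) (w : Fin q → ℕ) (s : ℕ) :
    oldJoint α V n j m nv (fun i => Fin.append mv w (Fin.cast h i)) s =
      m ! * (∏ i, risingFac (nv (Fin.cast h.symm (Fin.castAdd q i)) - α) (mv i)) /
          ((∏ i, ((mv i)! : ℝ)) * s !) *
        (∏ i, risingFac (nv (Fin.cast h.symm (Fin.natAdd r i)) - α) (w i) / (w i)!) *
        ∑ k ∈ range (s + 1), V (n + m) (j + k) / V n j * genStirling α s k := by
  rw [oldJoint, prod_univ_eq_prod_castAdd_mul_prod_natAdd h,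
    prod_univ_eq_prod_castAdd_mul_prod_natAdd h (fun i => risingFac _ _)]
  simp only [Fin.cast_cast, Fin.cast_eq_self, Fin.append_left, Fin.append_right,
    prod_div_distrib]
  field_simp

/-- The `r`-dimensional marginal of the joint conditional distribution of
old-block allocations. -/
theorem oldJoint_marginal (n j m : ℕ) (nv : Fin j → ℕ) (hsum : ∑ i, nv i = n)
    (α : ℝ) (V : ℕ → ℕ → ℝ) (r : ℕ) (hrj : r ≤ j) (mv : Fin r → ℕ) :
    ∑ p ∈ ((Fintype.piFinset fun _ : Fin (j - r) => Finset.range (m + 1)) ×ˢ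
          Finset.range (m + 1)).filter
        (fun p => ∑ i, p.1 i + p.2 = m - ∑ i, mv i),
        oldJoint α V n j m nv
          (fun i => Fin.append mv p.1 (Fin.cast (show j = r + (j - r) by omega) i))
          p.2 =
      (Nat.factorial m : ℝ) *
          (∏ i, risingFac ((nv (Fin.castLE hrj i) : ℝ) - α) (mv i)) /
          ((∏ i, (Nat.factorial (mv i) : ℝ)) * (Nat.factorial (m - ∑ i, mv i) : ℝ)) *
        ∑ k ∈ Finset.range (m - ∑ i, mv i + 1),
          (V (n + m) (j + k) / V n j) *
            genStirlingNC α
              (-((n : ℝ) - ((j : ℝ) - r) * α - ∑ i, (nv (Fin.castLE hrj i) : ℝ)))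
              (m - ∑ i, mv i) k := by
  have h : j = r + (j - r) := by omega
  set t := m - ∑ i, mv i
  have hy : ∑ i : Fin (j - r), ((nv (Fin.cast h.symm (Fin.natAdd r i)) : ℝ) - α) =
      n - (j - r) * α - ∑ i, (nv (Fin.castLE hrj i) : ℝ) := by
    have hn : (n : ℝ) = ∑ i, (nv (Fin.castLE hrj i) : ℝ) +
        ∑ i : Fin (j - r), (nv (Fin.cast h.symm (Fin.natAdd r i)) : ℝ) := by
      rw [← hsum, Nat.cast_sum, sum_univ_eq_sum_castAdd_add_sum_natAdd h]
      rfl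
    rw [sum_sub_distrib, hn]
    rw [sum_const, Finset.card_fin, nsmul_eq_mul, Nat.cast_sub hrj]
    ring
  rw [sum_filter_piFinset_product_eq_sum_antidiagonalTuple _ m t (Nat.sub_le _ _)]
  simp_rw [oldJoint_append α V n m h, ← sum_mul, ← mul_sum, sum_prod_risingFac_div_factorial,
    hy]
  have hcast : ∀ i, Fin.cast h.symm (Fin.castAdd (j - r) i) = Fin.castLE hrj i :=
    fun _ => rfl
  rw [← sum_choose_mul_risingFac_mul_sum_genStirling, mul_sum]
  refine sum_congr rfl fun s hs => ?_
  simp only [hcast]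
  rw [Nat.cast_choose ℝ (Nat.lt_succ_iff.mp (mem_range.mp hs))]
  field_simp
end

section
/- Fix integers n, j, m ≥ 1 with j ≤ n, a composition (n_1,…,n_j) of n into j positive parts, a real α < 1, and real weights V(n,k) with V(n,j) ≠ 0 and V(n+m, j+k) ≠ 0 for all k ∈ {1,…,m}. Let 1 ≤ l ≤ m. Then the Bayesian nonparametric estimator of the probability of observing at step n+m+1 a species represented l times among the new species satisfies: ∑ (V(n+m+1,j+k)/V(n+m,j+k))·(l−α)·#{i ∈ {1,…,k} : s_i = l}·P(s_1,…,s_k; k) = (l−α)·binom(m,l)·(1−α)_{l−1}·∑_{k=1}^{m−l+1} (V(n+m+1,j+k)/V(n,j))·S(m−l, k−1; α, −(n−jα)), where the left sum ranges over all k ∈ {1,…,m} and all tuples (s_1,…,s_k) of positive integers with ∑_{i=1}^{k} s_i ≤ m. -/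
/-- The conditional multivariate Gibbs distribution weight
`P(s_1,…,s_k;k) = m!/(s_1!⋯s_k!·k!·(m−s)!)·(V(n+m,j+k)/V(n,j))·(n−jα)_{m−s}·
∏_i (1−α)_{s_i−1}`, where `s = ∑ s_i`. -/
noncomputable def condMulti (α : ℝ) (V : ℕ → ℕ → ℝ) (n j m : ℕ) (k : ℕ)
    (sv : Fin k → ℕ) : ℝ :=
  (Nat.factorial m : ℝ) /
      ((∏ i, (Nat.factorial (sv i) : ℝ)) * (Nat.factorial k : ℝ) *
        (Nat.factorial (m - ∑ i, sv i) : ℝ)) *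
    (V (n + m) (j + k) / V n j) * risingFac ((n : ℝ) - j * α) (m - ∑ i, sv i) *
    ∏ i, risingFac (1 - α) (sv i - 1)


/-!
Each of the `k` new species has size `l` with the same weight, by exchangeability of the Gibbs
weights, so the count `#{i | s_i = l}` can be traded for `k` times the indicator that the last
species has size `l`. Fixing that last part to `l` leaves a free tuple of `k - 1` positive parts
of total at most `m - l`; grouping those tuples by their total `s` produces exactly
`C(m - l, s) · S(s, k - 1; α) · (n - jα)_{m - l - s}`, i.e. the non-central Stirling number
`S(m - l, k - 1; α, -(n - jα))`.
-/

open Finset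

section PermInvariant

variable {ι β M : Type*} [Fintype ι] [DecidableEq ι] [DecidableEq β] [AddCommMonoid M]

theorem sum_card_filter_nsmul_eq_card_nsmul_sum_filter (s : Finset (ι → β))
    (f : (ι → β) → M) (hs : ∀ σ : Equiv.Perm ι, ∀ v ∈ s, v ∘ σ ∈ s)
    (hf : ∀ (σ : Equiv.Perm ι) v, f (v ∘ σ) = f v) (b : β) (i₀ : ι) :
    ∑ v ∈ s, #{i | v i = b} • f v = Fintype.card ι • ∑ v ∈ s with v i₀ = b, f v := by
  calc ∑ v ∈ s, #{i | v i = b} • f v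
      = ∑ i, ∑ v ∈ s, if v i = b then f v else 0 := by
        rw [sum_comm]
        exact sum_congr rfl fun v _ => by rw [← sum_const, sum_filter]
    _ = ∑ _i : ι, ∑ v ∈ s, if v i₀ = b then f v else 0 := by
        refine sum_congr rfl fun i _ => ?_
        have hswap : ∀ v : ι → β, v ∘ Equiv.swap i i₀ ∘ Equiv.swap i i₀ = v := fun v => by
          funext; simp
        refine sum_nbij' (· ∘ Equiv.swap i i₀) (· ∘ Equiv.swap i i₀) (fun v hv => hs _ v hv)
          (fun v hv => hs _ v hv) (fun v _ => hswap v) (fun v _ => hswap v) fun v _ => ?_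
        simp [hf]
    _ = Fintype.card ι • ∑ v ∈ s with v i₀ = b, f v := by
        rw [sum_const, card_univ, sum_filter]

end PermInvariant

def boundedCompositions (m k : ℕ) : Finset (Fin k → ℕ) :=
  (Fintype.piFinset fun _ : Fin k => Icc 1 m).filter fun sv => ∑ i, sv i ≤ m

theorem mem_boundedCompositions {m k : ℕ} {sv : Fin k → ℕ} :
    sv ∈ boundedCompositions m k ↔ (∀ i, 0 < sv i) ∧ ∑ i, sv i ≤ m := by
  simp only [boundedCompositions, mem_filter, Fintype.mem_piFinset, mem_Icc, Nat.one_le_iff_ne_zero,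
    Nat.pos_iff_ne_zero]
  refine ⟨fun h => ⟨fun i => (h.1 i).1, h.2⟩, fun h => ⟨fun i => ⟨h.1 i, ?_⟩, h.2⟩⟩
  exact (single_le_sum (fun _ _ => Nat.zero_le _) (mem_univ i)).trans h.2

theorem comp_perm_mem_boundedCompositions {m k : ℕ} (σ : Equiv.Perm (Fin k)) (sv : Fin k → ℕ)
    (hsv : sv ∈ boundedCompositions m k) : sv ∘ σ ∈ boundedCompositions m k := by
  rw [mem_boundedCompositions] at hsv ⊢
  exact ⟨fun i => hsv.1 (σ i), (Equiv.sum_comp σ sv).le.trans hsv.2⟩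

theorem sum_boundedCompositions_filter_last_eq {M : Type*} [AddCommMonoid M] {m l k : ℕ}
    (hl : 1 ≤ l) (hlm : l ≤ m) (f : (Fin (k + 1) → ℕ) → M) :
    ∑ sv ∈ boundedCompositions m (k + 1) with sv (Fin.last k) = l, f sv =
      ∑ t ∈ boundedCompositions (m - l) k, f (Fin.snoc t l) := by
  have hsum : ∀ t : Fin k → ℕ, ∑ i, (Fin.snoc t l : Fin (k + 1) → ℕ) i = ∑ i, t i + l := by
    simp [Fin.sum_univ_castSucc]
  refine sum_nbij' Fin.init (Fin.snoc · l) (fun sv hsv => ?_) (fun t ht => ?_)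
    (fun sv hsv => ?_) (fun t _ => Fin.init_snoc _ _) (fun sv hsv => ?_)
  · obtain ⟨hsv, hlast⟩ := mem_filter.1 hsv
    rw [mem_boundedCompositions] at hsv ⊢
    refine ⟨fun i => hsv.1 _, ?_⟩
    have := hsv.2
    rw [Fin.sum_univ_castSucc, hlast] at this
    exact Nat.le_sub_of_add_le this
  · rw [mem_boundedCompositions] at ht
    refine mem_filter.2 ⟨mem_boundedCompositions.2 ⟨fun i => ?_, ?_⟩, Fin.snoc_last _ _⟩
    · exact Fin.lastCases (by rw [Fin.snoc_last]; omega) (fun i => by simpa using ht.1 i) i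
    · rw [hsum]; omega
  all_goals rw [← (mem_filter.1 hsv).2, Fin.snoc_init_self]

theorem sum_boundedCompositions_eq_sum_compositions {M : Type*} [AddCommMonoid M] (m k : ℕ)
    (f : (Fin k → ℕ) → M) :
    ∑ t ∈ boundedCompositions m k, f t = ∑ s ∈ Icc k m, ∑ t ∈ compositions s k, f t := by
  rw [← sum_fiberwise_of_maps_to (g := fun t => ∑ i, t i) (t := Icc k m)]
  · refine sum_congr rfl fun s hs => sum_congr (ext fun t => ?_) fun _ _ => rfl
    simp only [mem_filter, mem_boundedCompositions, compositions, Fintype.mem_piFinset,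
      mem_range]
    constructor
    · rintro ⟨⟨hpos, -⟩, rfl⟩
      exact ⟨fun i => Nat.lt_succ_of_le (single_le_sum (by simp) (mem_univ i)), hpos, rfl⟩
    · rintro ⟨-, hpos, rfl⟩
      exact ⟨⟨hpos, (mem_Icc.1 hs).2⟩, rfl⟩
  · intro t ht
    rw [mem_boundedCompositions] at ht
    refine mem_Icc.2 ⟨?_, ht.2⟩
    simpa using sum_le_sum fun i (_ : i ∈ univ) => Nat.one_le_iff_ne_zero.2 (ht.1 i).ne'

/-- `condMulti` without its `V`-factor; `x` stands for `n - jα`. -/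
noncomputable def gibbsWeight (α x : ℝ) (m : ℕ) {k : ℕ} (sv : Fin k → ℕ) : ℝ :=
  (Nat.factorial m : ℝ) /
      ((∏ i, (Nat.factorial (sv i) : ℝ)) * (Nat.factorial k : ℝ) *
        (Nat.factorial (m - ∑ i, sv i) : ℝ)) *
    risingFac x (m - ∑ i, sv i) * ∏ i, risingFac (1 - α) (sv i - 1)

theorem condMulti_eq_mul_gibbsWeight (α : ℝ) (V : ℕ → ℕ → ℝ) (n j m k : ℕ) (sv : Fin k → ℕ) :
    condMulti α V n j m k sv = V (n + m) (j + k) / V n j * gibbsWeight α (n - j * α) m sv := by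
  unfold condMulti gibbsWeight
  ring

theorem gibbsWeight_comp_perm (α x : ℝ) (m : ℕ) {k : ℕ} (σ : Equiv.Perm (Fin k))
    (sv : Fin k → ℕ) : gibbsWeight α x m (sv ∘ σ) = gibbsWeight α x m sv := by
  simp only [gibbsWeight, Function.comp_apply, Equiv.sum_comp σ sv,
    Equiv.prod_comp σ fun i => ((sv i).factorial : ℝ),
    Equiv.prod_comp σ fun i => risingFac (1 - α) (sv i - 1)]

theorem succ_mul_gibbsWeight_snoc (α x : ℝ) {m l k : ℕ} (hlm : l ≤ m) (t : Fin k → ℕ)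
    (ht : ∑ i, t i ≤ m - l) :
    (k + 1) * gibbsWeight α x m (Fin.snoc t l : Fin (k + 1) → ℕ) =
      m.choose l * risingFac (1 - α) (l - 1) *
        ((m - l).choose (∑ i, t i) *
          ((∑ i, t i).factorial / k.factorial *
            ∏ i, risingFac (1 - α) (t i - 1) / (t i).factorial) *
          risingFac x (m - l - ∑ i, t i)) := by
  have hexp : m - (∑ i, t i + l) = m - l - ∑ i, t i := by omega
  simp only [gibbsWeight, Fin.sum_univ_castSucc, Fin.prod_univ_castSucc, Fin.snoc_castSucc,
    Fin.snoc_last, hexp, prod_div_distrib, Nat.cast_choose ℝ hlm, Nat.cast_choose ℝ ht,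
    Nat.factorial_succ]
  have : (∏ i, ((t i).factorial : ℝ)) ≠ 0 := prod_ne_zero_iff.2 fun i _ => by positivity
  push_cast
  field_simp

theorem sum_card_filter_mul_gibbsWeight (α x : ℝ) {m l : ℕ} (hl : 1 ≤ l) (hlm : l ≤ m)
    (k : ℕ) :
    ∑ sv ∈ boundedCompositions m (k + 1),
        (#{i | sv i = l} : ℝ) * gibbsWeight α x m sv =
      m.choose l * risingFac (1 - α) (l - 1) * genStirlingNC α (-x) (m - l) k := by
  rw [sum_congr rfl fun sv _ => (nsmul_eq_mul _ _).symm, sum_card_filter_nsmul_eq_card_nsmul_sum_filter _ _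
      (fun σ => comp_perm_mem_boundedCompositions σ) (gibbsWeight_comp_perm α x m) l
      (Fin.last k),
    sum_boundedCompositions_filter_last_eq hl hlm, sum_boundedCompositions_eq_sum_compositions,
    Fintype.card_fin, nsmul_eq_mul, mul_sum, genStirlingNC, mul_sum]
  refine sum_congr rfl fun s hs => ?_
  rw [genStirling, mul_sum, mul_sum, mul_sum, sum_mul, mul_sum]
  refine sum_congr rfl fun t ht => ?_
  obtain ⟨-, -, rfl⟩ := mem_filter.1 ht
  rw [Nat.cast_succ, succ_mul_gibbsWeight_snoc α x hlm t (mem_Icc.1 hs).2, neg_neg]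

theorem genStirlingNC_eq_zero_of_lt (α γ : ℝ) {n k : ℕ} (h : n < k) :
    genStirlingNC α γ n k = 0 := by
  rw [genStirlingNC, Icc_eq_empty_of_lt h, sum_empty]

theorem bayes_estimator_new_species_size_l_general (n j m : ℕ)
    (α : ℝ) (V : ℕ → ℕ → ℝ)
    (hV2 : ∀ k ∈ Finset.Icc 1 m, V (n + m) (j + k) ≠ 0)
    (l : ℕ) (hl : 1 ≤ l) (hlm : l ≤ m) :
    ∑ k ∈ Finset.Icc 1 m,
        ∑ sv ∈ (Fintype.piFinset fun _ : Fin k => Finset.Icc 1 m).filter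
            (fun sv => ∑ i, sv i ≤ m),
          V (n + m + 1) (j + k) / V (n + m) (j + k) * ((l : ℝ) - α) *
            (((Finset.univ.filter fun i => sv i = l).card : ℕ) : ℝ) *
            condMulti α V n j m k sv =
      ((l : ℝ) - α) * (m.choose l : ℝ) * risingFac (1 - α) (l - 1) *
        ∑ k ∈ Finset.Icc 1 (m - l + 1),
          V (n + m + 1) (j + k) / V n j *
            genStirlingNC α (-((n : ℝ) - j * α)) (m - l) (k - 1) := by
  rw [sum_subset (s₁ := Icc 1 (m - l + 1)) (s₂ := Icc 1 m) (Icc_subset_Icc_right (by omega))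
      fun k hk hk' => by
        simp only [mem_Icc] at hk hk'
        rw [genStirlingNC_eq_zero_of_lt _ _ (by omega), mul_zero], mul_sum]
  refine sum_congr rfl fun k hk => ?_
  obtain ⟨k, rfl⟩ : ∃ k', k = k' + 1 := ⟨k - 1, by grind⟩
  have hVk := hV2 _ hk
  calc _ = (l - α) * (V (n + m + 1) (j + (k + 1)) / V n j) *
        ∑ sv ∈ boundedCompositions m (k + 1),
          (#{i | sv i = l} : ℝ) * gibbsWeight α (n - j * α) m sv := by
        rw [mul_sum]
        refine sum_congr rfl fun sv _ => ?_
        rw [condMulti_eq_mul_gibbsWeight]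
        field_simp
    _ = _ := by
        rw [sum_card_filter_mul_gibbsWeight _ _ hl hlm, Nat.add_sub_cancel]
        ring

/-- Bayesian nonparametric estimator of the probability of observing at step
`n+m+1` a species represented `l` times among the new species. -/
theorem bayes_estimator_new_species_size_l (n j m : ℕ) (hn : 1 ≤ n) (hj : 1 ≤ j)
    (hm : 1 ≤ m) (hjn : j ≤ n)
    (nv : Fin j → ℕ) (hnv : ∀ i, 0 < nv i) (hsum : ∑ i, nv i = n)
    (α : ℝ) (hα : α < 1) (V : ℕ → ℕ → ℝ) (hV : V n j ≠ 0)
    (hV2 : ∀ k ∈ Finset.Icc 1 m, V (n + m) (j + k) ≠ 0)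
    (l : ℕ) (hl : 1 ≤ l) (hlm : l ≤ m) :
    ∑ k ∈ Finset.Icc 1 m,
        ∑ sv ∈ (Fintype.piFinset fun _ : Fin k => Finset.Icc 1 m).filter
            (fun sv => ∑ i, sv i ≤ m),
          V (n + m + 1) (j + k) / V (n + m) (j + k) * ((l : ℝ) - α) *
            (((Finset.univ.filter fun i => sv i = l).card : ℕ) : ℝ) *
            condMulti α V n j m k sv =
      ((l : ℝ) - α) * (m.choose l : ℝ) * risingFac (1 - α) (l - 1) *
        ∑ k ∈ Finset.Icc 1 (m - l + 1),
          V (n + m + 1) (j + k) / V n j *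
            genStirlingNC α (-((n : ℝ) - j * α)) (m - l) (k - 1) :=
  bayes_estimator_new_species_size_l_general n j m α V hV2 l hl hlm
end
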